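/- Let p ≥ 4 and let (u_1,…,u_p) in ℝ^{p−2} be defined by u_1 = e_{p−2}, u_2 = Σ_{j=1}^{p−2} (−1)^{j+1} e_j, u_3 = e_1, u_j = e_{j−3} + e_{j−2} for 4 ≤ j ≤ p. Then the set of matrices { u_i u_j^T + u_j u_i^T : {i,j} a nonedge of C_p } is linearly independent in the space of (p−2)×(p−2) symmetric matrices, and hence spans a subspace of dimension C(p,2) − p = C(p−1,2) − 1. -/
import Mathlib


open Matrix BigOperators

/-- Adjacency in the cycle `C_p` on `Fin p` (0-based): `i` and `j` are adjacent iff they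
are consecutive mod `p`. -/
def finCycAdj (p : ℕ) (i j : Fin p) : Prop :=
  (j : ℕ) = ((i : ℕ) + 1) % p ∨ (i : ℕ) = ((j : ℕ) + 1) % p

/-- The vectors `u_1 = e_{p-2}`, `u_2 = ∑_{j=1}^{p-2} (-1)^{j+1} e_j`, `u_3 = e_1`,
`u_j = e_{j-3} + e_{j-2}` for `4 ≤ j ≤ p`, written 0-based: vertex `t : Fin p`,
coordinates `Fin (p-2)`. -/
noncomputable def uvec (p : ℕ) (t : Fin p) : Fin (p - 2) → ℝ := fun l =>
  if (t : ℕ) = 0 then (if (l : ℕ) = p - 3 then 1 else 0)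
  else if (t : ℕ) = 1 then (-1 : ℝ) ^ (l : ℕ)
  else if (t : ℕ) = 2 then (if (l : ℕ) = 0 then 1 else 0)
  else if (l : ℕ) = (t : ℕ) - 3 ∨ (l : ℕ) = (t : ℕ) - 2 then 1 else 0

namespace UvecAux

instance (p : ℕ) (i j : Fin p) : Decidable (finCycAdj p i j) := by
  unfold finCycAdj; exact inferInstance

variable {p : ℕ}

lemma adj_symm {i j : Fin p} (h : finCycAdj p i j) : finCycAdj p j i := Or.symm h

def Avert (p : ℕ) (hp : 4 ≤ p) (m : ℕ) : Fin p := ⟨(m + 2) % p, Nat.mod_lt _ (by omega)⟩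

lemma adj_avert (hp : 4 ≤ p) (m : ℕ) : finCycAdj p (Avert p hp m) (Avert p hp (m + 1)) := by
  left
  show (m + 1 + 2) % p = ((m + 2) % p + 1) % p
  conv_rhs => rw [Nat.mod_add_mod]

lemma adj_e1_avert0 (hp : 4 ≤ p) : finCycAdj p ⟨1, by omega⟩ (Avert p hp 0) := by
  left
  show (0 + 2) % p = (1 + 1) % p
  rfl

/-- The symmetric coefficient array attached to coefficients on nonedges. -/
noncomputable def ccf (p : ℕ)
    (c : {q : Fin p × Fin p // q.1 < q.2 ∧ ¬ finCycAdj p q.1 q.2} → ℝ)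
    (q : Fin p × Fin p) : ℝ :=
  if h : q.1 < q.2 ∧ ¬ finCycAdj p q.1 q.2 then c ⟨q, h⟩ else 0

noncomputable def Cmat (p : ℕ)
    (c : {q : Fin p × Fin p // q.1 < q.2 ∧ ¬ finCycAdj p q.1 q.2} → ℝ)
    (i j : Fin p) : ℝ :=
  ccf p c (i, j) + ccf p c (j, i)

variable {c : {q : Fin p × Fin p // q.1 < q.2 ∧ ¬ finCycAdj p q.1 q.2} → ℝ}

lemma Cmat_symm (i j : Fin p) : Cmat p c i j = Cmat p c j i := add_comm _ _

lemma Cmat_diag (i : Fin p) : Cmat p c i i = 0 := by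
  simp [Cmat, ccf]

lemma Cmat_adj {i j : Fin p} (h : finCycAdj p i j) : Cmat p c i j = 0 := by
  simp only [Cmat, ccf]
  rw [dif_neg (fun hc => hc.2 h), dif_neg (fun hc => hc.2 (adj_symm h)), add_zero]

lemma Cmat_nonedge {i j : Fin p} (h : i < j ∧ ¬ finCycAdj p i j) :
    Cmat p c i j = c ⟨(i, j), h⟩ := by
  simp only [Cmat, ccf]
  rw [dif_pos h, dif_neg (fun hc => lt_asymm h.1 hc.1), add_zero]

lemma sum_Cmat (k l : Fin (p - 2)) :
    ∑ i : Fin p, ∑ j : Fin p, Cmat p c i j * uvec p i k * uvec p j l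
      = ∑ q : {q : Fin p × Fin p // q.1 < q.2 ∧ ¬ finCycAdj p q.1 q.2},
          c q * (uvec p q.1.1 k * uvec p q.1.2 l + uvec p q.1.2 k * uvec p q.1.1 l) := by
  have step1 : ∀ i j : Fin p, Cmat p c i j * uvec p i k * uvec p j l
      = ccf p c (i, j) * (uvec p i k * uvec p j l)
        + ccf p c (j, i) * (uvec p i k * uvec p j l) := by
    intro i j; unfold Cmat; ring
  simp only [step1, Finset.sum_add_distrib]
  have hswap : ∑ i : Fin p, ∑ j : Fin p, ccf p c (j, i) * (uvec p i k * uvec p j l)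
      = ∑ i : Fin p, ∑ j : Fin p, ccf p c (i, j) * (uvec p j k * uvec p i l) :=
    Finset.sum_comm
  rw [hswap, ← Finset.sum_add_distrib]
  have step2 : ∀ i : Fin p,
      ((∑ j : Fin p, ccf p c (i, j) * (uvec p i k * uvec p j l))
        + ∑ j : Fin p, ccf p c (i, j) * (uvec p j k * uvec p i l))
      = ∑ j : Fin p, ccf p c (i, j)
          * (uvec p i k * uvec p j l + uvec p j k * uvec p i l) := by
    intro i
    rw [← Finset.sum_add_distrib]
    exact Finset.sum_congr rfl fun j _ => by ring
  simp only [step2]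
  rw [← Fintype.sum_prod_type
    (f := fun x : Fin p × Fin p => ccf p c x
      * (uvec p x.1 k * uvec p x.2 l + uvec p x.2 k * uvec p x.1 l))]
  classical
  have hmem : ∀ x : Fin p × Fin p,
      x ∈ Finset.univ.filter (fun q : Fin p × Fin p => q.1 < q.2 ∧ ¬ finCycAdj p q.1 q.2)
        ↔ (x.1 < x.2 ∧ ¬ finCycAdj p x.1 x.2) := by
    intro x; simp
  have hzero : ∀ x ∈ (Finset.univ : Finset (Fin p × Fin p)),
      x ∉ Finset.univ.filter (fun q : Fin p × Fin p => q.1 < q.2 ∧ ¬ finCycAdj p q.1 q.2) →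
        ccf p c x * (uvec p x.1 k * uvec p x.2 l + uvec p x.2 k * uvec p x.1 l) = 0 := by
    intro x _ hx
    have hx' : ¬ (x.1 < x.2 ∧ ¬ finCycAdj p x.1 x.2) := by
      intro h; exact hx (Finset.mem_filter.2 ⟨Finset.mem_univ _, h⟩)
    have hz : ccf p c x = 0 := by simp only [ccf]; rw [dif_neg hx']
    rw [hz, zero_mul]
  rw [← Finset.sum_subset (Finset.filter_subset _ _) hzero, Finset.sum_subtype _ hmem]
  refine Finset.sum_congr rfl fun q _ => ?_
  have hq : ccf p c ↑q = c q := by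
    simp only [ccf]
    rw [dif_pos q.2]
  rw [hq]


variable {p : ℕ}

/-- vertex `(m+2) mod p` -/


lemma Avert_val (hp : 4 ≤ p) (m : ℕ) (hm : m ≤ p - 3) :
    ((Avert p hp m : Fin p) : ℕ) = m + 2 := by
  simp only [Avert]
  exact Nat.mod_eq_of_lt (by omega)

lemma Avert_val_last (hp : 4 ≤ p) : ((Avert p hp (p - 2) : Fin p) : ℕ) = 0 := by
  simp only [Avert]
  have : p - 2 + 2 = p := by omega
  rw [this, Nat.mod_self]

lemma Avert_val_cases (hp : 4 ≤ p) (m : ℕ) (hm : m ≤ p - 2) :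
    (m ≤ p - 3 ∧ ((Avert p hp m : Fin p) : ℕ) = m + 2) ∨
      (m = p - 2 ∧ ((Avert p hp m : Fin p) : ℕ) = 0) := by
  rcases Nat.lt_or_ge m (p - 2) with h | h
  · exact Or.inl ⟨by omega, Avert_val hp m (by omega)⟩
  · have : m = p - 2 := by omega
    subst this
    exact Or.inr ⟨rfl, Avert_val_last hp⟩

lemma sum_uvec_mul (hp : 4 ≤ p) (X : Fin p → ℝ) (k : Fin (p - 2)) :
    ∑ i : Fin p, uvec p i k * X i
      = (-1) ^ (k : ℕ) * X ⟨1, by omega⟩ + X (Avert p hp (k : ℕ)) + X (Avert p hp ((k : ℕ) + 1)) := by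
  have hk : (k : ℕ) ≤ p - 3 := by have := k.2; omega
  set e1 : Fin p := ⟨1, by omega⟩ with he1
  set e2 : Fin p := Avert p hp (k : ℕ) with he2
  set e3 : Fin p := Avert p hp ((k : ℕ) + 1) with he3
  have h2 : (e2 : ℕ) = (k : ℕ) + 2 := Avert_val hp _ hk
  have h3 : ((k : ℕ) = p - 3 ∧ (e3 : ℕ) = 0) ∨ ((k : ℕ) < p - 3 ∧ (e3 : ℕ) = (k : ℕ) + 3) := by
    rcases Avert_val_cases hp ((k : ℕ) + 1) (by omega) with ⟨h, h'⟩ | ⟨h, h'⟩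
    · exact Or.inr ⟨by omega, by omega⟩
    · exact Or.inl ⟨by omega, by omega⟩
  have he1v : (e1 : ℕ) = 1 := rfl
  clear_value e1 e2 e3
  have hne12 : e1 ≠ e2 := by
    intro h; rw [Fin.ext_iff] at h; omega
  have hne13 : e1 ≠ e3 := by
    intro h; rw [Fin.ext_iff] at h; rcases h3 with ⟨_, h'⟩ | ⟨_, h'⟩ <;> omega
  have hne23 : e2 ≠ e3 := by
    intro h; rw [Fin.ext_iff] at h; rcases h3 with ⟨_, h'⟩ | ⟨_, h'⟩ <;> omega
  have hsub : ∑ i : Fin p, uvec p i k * X i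
      = ∑ i ∈ ({e1, e2, e3} : Finset (Fin p)), uvec p i k * X i := by
    refine (Finset.sum_subset (Finset.subset_univ _) ?_).symm
    intro i _ hi
    simp only [Finset.mem_insert, Finset.mem_singleton, not_or] at hi
    obtain ⟨hi1, hi2, hi3⟩ := hi
    have hv1 : (i : ℕ) ≠ 1 := fun h => hi1 (Fin.ext (by omega))
    have hv2 : (i : ℕ) ≠ (e2 : ℕ) := fun h => hi2 (Fin.ext h)
    have hv3 : (i : ℕ) ≠ (e3 : ℕ) := fun h => hi3 (Fin.ext h)
    have hip : (i : ℕ) < p := i.2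
    have : uvec p i k = 0 := by
      unfold uvec
      split_ifs with g0 g1 g2 g3 <;>
        first
          | rfl
          | (exfalso; rcases h3 with ⟨h, h'⟩ | ⟨h, h'⟩ <;> omega)
    rw [this, zero_mul]
  rw [hsub]
  rw [Finset.sum_insert (by simp [hne12, hne13]),
    Finset.sum_insert (by simpa using hne23), Finset.sum_singleton]
  have hu1 : uvec p e1 k = (-1) ^ (k : ℕ) := by
    unfold uvec
    rw [he1v]
    norm_num
  have hu2 : uvec p e2 k = 1 := by
    unfold uvec
    rcases Nat.eq_zero_or_pos (k : ℕ) with h | h <;>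
      split_ifs with g0 g1 g2 g3 <;> first | rfl | (exfalso; omega)
  have hu3 : uvec p e3 k = 1 := by
    unfold uvec
    rcases h3 with ⟨h, h'⟩ | ⟨h, h'⟩ <;>
      split_ifs with g0 g1 g2 g3 <;> first | rfl | (exfalso; omega)
  rw [hu1, hu2, hu3]; ring

end UvecAux


open UvecAux in
/-- The matrices `u_i u_jᵀ + u_j u_iᵀ`, for `{i,j}` ranging over the nonedges of the
cycle `C_p`, form a linearly independent set of symmetric `(p-2) × (p-2)` matrices, and
hence span a subspace of dimension `C(p,2) - p = C(p-1,2) - 1`. -/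
theorem uvec_frame_matrices_linearIndependent (p : ℕ) (hp : 4 ≤ p) :
    LinearIndependent ℝ
      (fun q : {q : Fin p × Fin p // q.1 < q.2 ∧ ¬ finCycAdj p q.1 q.2} =>
        Matrix.vecMulVec (uvec p q.1.1) (uvec p q.1.2) +
          Matrix.vecMulVec (uvec p q.1.2) (uvec p q.1.1)) ∧
    Module.finrank ℝ (Submodule.span ℝ
      (Set.range (fun q : {q : Fin p × Fin p // q.1 < q.2 ∧ ¬ finCycAdj p q.1 q.2} =>
        Matrix.vecMulVec (uvec p q.1.1) (uvec p q.1.2) +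
          Matrix.vecMulVec (uvec p q.1.2) (uvec p q.1.1)))) =
      p.choose 2 - p := by
  
  have hLI : LinearIndependent ℝ
      (fun q : {q : Fin p × Fin p // q.1 < q.2 ∧ ¬ finCycAdj p q.1 q.2} =>
        Matrix.vecMulVec (uvec p q.1.1) (uvec p q.1.2) +
          Matrix.vecMulVec (uvec p q.1.2) (uvec p q.1.1)) := by
    rw [Fintype.linearIndependent_iff]
    intro c hc
    set A : ℕ → Fin p := Avert p hp with hA
    set e1 : Fin p := ⟨1, by omega⟩ with he1
    have hEntry : ∀ k l : Fin (p - 2),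
        ∑ i : Fin p, ∑ j : Fin p, Cmat p c i j * uvec p i k * uvec p j l = 0 := by
      intro k l
      rw [sum_Cmat]
      have h0 := congrFun (congrFun hc k) l
      simpa [Matrix.sum_apply, Matrix.vecMulVec_apply, mul_add] using h0
    have hE : ∀ k l : Fin (p - 2),
        (-1) ^ (k : ℕ) * ((-1) ^ (l : ℕ) * Cmat p c e1 e1
            + Cmat p c e1 (A (l : ℕ)) + Cmat p c e1 (A ((l : ℕ) + 1)))
          + ((-1) ^ (l : ℕ) * Cmat p c (A (k : ℕ)) e1
            + Cmat p c (A (k : ℕ)) (A (l : ℕ)) + Cmat p c (A (k : ℕ)) (A ((l : ℕ) + 1)))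
          + ((-1) ^ (l : ℕ) * Cmat p c (A ((k : ℕ) + 1)) e1
            + Cmat p c (A ((k : ℕ) + 1)) (A (l : ℕ))
            + Cmat p c (A ((k : ℕ) + 1)) (A ((l : ℕ) + 1))) = 0 := by
      intro k l
      have h := hEntry k l
      have hre : ∑ i : Fin p, ∑ j : Fin p, Cmat p c i j * uvec p i k * uvec p j l
          = ∑ i : Fin p, uvec p i k * ∑ j : Fin p, uvec p j l * Cmat p c i j := by
        refine Finset.sum_congr rfl fun i _ => ?_
        rw [Finset.mul_sum]
        exact Finset.sum_congr rfl fun j _ => by ring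
      rw [hre] at h
      simp only [sum_uvec_mul hp] at h
      exact h
    have hd0 : Cmat p c e1 (A 0) = 0 := Cmat_adj (adj_e1_avert0 hp)
    have hdstep : ∀ m : ℕ, (hm : m < p - 2) →
        Cmat p c e1 (A (m + 1)) = - Cmat p c e1 (A m) := by
      intro m hm
      have h := hE ⟨m, hm⟩ ⟨m, hm⟩
      rw [show ((⟨m, hm⟩ : Fin (p - 2)) : ℕ) = m from rfl] at h
      rw [Cmat_diag, Cmat_adj (adj_avert hp m)] at h
      rw [Cmat_symm (A (m + 1)) (A m), Cmat_adj (adj_avert hp m)] at h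
      rw [Cmat_diag, Cmat_diag] at h
      rw [Cmat_symm (A m) e1, Cmat_symm (A (m + 1)) e1] at h
      rcases Nat.even_or_odd m with hm2 | hm2
      · rw [hm2.neg_one_pow] at h; linarith
      · rw [hm2.neg_one_pow] at h; linarith
    have hd : ∀ m : ℕ, m ≤ p - 2 → Cmat p c e1 (A m) = 0 := by
      intro m
      induction m with
      | zero => exact fun _ => hd0
      | succ n ih =>
        intro h
        rw [hdstep n (by omega), ih (by omega), neg_zero]
    have hsq : ∀ km lm : ℕ, km < p - 2 → lm < p - 2 →
        Cmat p c (A km) (A lm) + Cmat p c (A km) (A (lm + 1))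
          + Cmat p c (A (km + 1)) (A lm) + Cmat p c (A (km + 1)) (A (lm + 1)) = 0 := by
      intro km lm hkm hlm
      have h := hE ⟨km, hkm⟩ ⟨lm, hlm⟩
      rw [show ((⟨km, hkm⟩ : Fin (p - 2)) : ℕ) = km from rfl,
        show ((⟨lm, hlm⟩ : Fin (p - 2)) : ℕ) = lm from rfl] at h
      rw [Cmat_diag, hd lm (by omega), hd (lm + 1) (by omega)] at h
      rw [Cmat_symm (A km) e1, Cmat_symm (A (km + 1)) e1,
        hd km (by omega), hd (km + 1) (by omega)] at h
      linarith
    have hF : ∀ dd m : ℕ, m + dd ≤ p - 2 → Cmat p c (A m) (A (m + dd)) = 0 := by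
      intro dd
      induction dd using Nat.strong_induction_on with
      | _ dd ih =>
        rcases dd with _ | (_ | e)
        · exact fun m hm => by rw [Nat.add_zero]; exact Cmat_diag _
        · exact fun m hm => Cmat_adj (adj_avert hp m)
        · intro m hm
          have h := hsq m (m + e + 1) (by omega) (by omega)
          have h1 : Cmat p c (A m) (A (m + e + 1)) = 0 := by
            have h' := ih (e + 1) (by omega) m (by omega)
            rw [show m + (e + 1) = m + e + 1 from by omega] at h'
            exact h'
          have h3 : Cmat p c (A (m + 1)) (A (m + e + 1)) = 0 := by
            have h' := ih e (by omega) (m + 1) (by omega)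
            rw [show m + 1 + e = m + e + 1 from by omega] at h'
            exact h'
          have h4 : Cmat p c (A (m + 1)) (A (m + e + 1 + 1)) = 0 := by
            have h' := ih (e + 1) (by omega) (m + 1) (by omega)
            rw [show m + 1 + (e + 1) = m + e + 1 + 1 from by omega] at h'
            exact h'
          rw [show m + (e + 1 + 1) = m + e + 1 + 1 from by omega]
          linarith
    intro q
    obtain ⟨⟨i, j⟩, hcond⟩ := q
    rw [← Cmat_nonedge (c := c) hcond]
    have hlt : i < j := hcond.1
    have hnadj : ¬ finCycAdj p i j := hcond.2
    have hij : (i : ℕ) < (j : ℕ) := hlt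
    have hjp : (j : ℕ) < p := j.2
    have hna1 : (j : ℕ) ≠ (i : ℕ) + 1 := by
      intro h
      exact hnadj (Or.inl (by rw [Nat.mod_eq_of_lt (show (i : ℕ) + 1 < p by omega)]; omega))
    have hna2 : (j : ℕ) = p - 1 → (i : ℕ) ≠ 0 := by
      intro hj hi
      apply hnadj
      right
      rw [hi, hj, show p - 1 + 1 = p from by omega, Nat.mod_self]
    rcases Nat.lt_or_ge (i : ℕ) 2 with hi2 | hi2
    · by_cases hi0 : (i : ℕ) = 0
      · have hj2 : 2 ≤ (j : ℕ) := by omega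
        have hjle : (j : ℕ) ≤ p - 2 := by
          rcases Nat.lt_or_ge (j : ℕ) (p - 1) with h | h
          · omega
          · exact absurd hi0 (hna2 (by omega))
        have hi' : i = A ((j : ℕ) - 2 + (p - (j : ℕ))) := by
          refine Fin.ext ?_
          rw [hA, show (j : ℕ) - 2 + (p - (j : ℕ)) = p - 2 from by omega, Avert_val_last hp]
          omega
        have hj' : j = A ((j : ℕ) - 2) := by
          refine Fin.ext ?_
          rw [hA, Avert_val hp _ (by omega)]
          omega
        have hres := hF (p - (j : ℕ)) ((j : ℕ) - 2) (by omega)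
        rw [Cmat_symm ((A ((j : ℕ) - 2))) (A ((j : ℕ) - 2 + (p - (j : ℕ))))] at hres
        rw [← hi', ← hj'] at hres
        exact hres
      · have hi1 : (i : ℕ) = 1 := by omega
        have hj3 : 3 ≤ (j : ℕ) := by omega
        have hi' : i = e1 := Fin.ext (by rw [he1]; exact hi1)
        have hj' : j = A ((j : ℕ) - 2) := by
          refine Fin.ext ?_
          rw [hA, Avert_val hp _ (by omega)]
          omega
        have hres := hd ((j : ℕ) - 2) (by omega)
        rw [← hi', ← hj'] at hres
        exact hres
    · have hi' : i = A ((i : ℕ) - 2) := by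
        refine Fin.ext ?_
        rw [hA, Avert_val hp _ (by omega)]
        omega
      have hj' : j = A ((i : ℕ) - 2 + ((j : ℕ) - (i : ℕ))) := by
        refine Fin.ext ?_
        rw [hA, Avert_val hp _ (by omega)]
        omega
      have hres := hF ((j : ℕ) - (i : ℕ)) ((i : ℕ) - 2) (by omega)
      rw [show (i : ℕ) - 2 + ((j : ℕ) - (i : ℕ)) = (j : ℕ) - 2 from by omega] at hres
      have hj'' : j = A ((j : ℕ) - 2) := by
        refine Fin.ext ?_
        rw [hA, Avert_val hp _ (by omega)]
        omega
      rw [← hi', ← hj''] at hres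
      exact hres
  refine ⟨hLI, ?_⟩
  rw [finrank_span_eq_card hLI]
  classical
  rw [Fintype.card_of_subtype
    (Finset.univ.filter fun q : Fin p × Fin p => q.1 < q.2 ∧ ¬ finCycAdj p q.1 q.2)
    (by intro x; simp)]
  have hSE : (Finset.univ.filter fun q : Fin p × Fin p => q.1 < q.2 ∧ ¬ finCycAdj p q.1 q.2)
      = (Finset.univ.filter fun q : Fin p × Fin p => q.1 < q.2)
        \ (Finset.univ.filter fun q : Fin p × Fin p => q.1 < q.2 ∧ finCycAdj p q.1 q.2) := by
    ext x
    simp only [Finset.mem_filter, Finset.mem_sdiff, Finset.mem_univ, true_and]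
    tauto
  have hET : (Finset.univ.filter fun q : Fin p × Fin p => q.1 < q.2 ∧ finCycAdj p q.1 q.2)
      ⊆ (Finset.univ.filter fun q : Fin p × Fin p => q.1 < q.2) := by
    intro x hx
    simp only [Finset.mem_filter, Finset.mem_univ, true_and] at hx ⊢
    exact hx.1
  have cardT : (Finset.univ.filter fun q : Fin p × Fin p => q.1 < q.2).card = p.choose 2 := by
    have h1 := Finset.card_filter_add_card_filter_not
      (s := (Finset.univ : Finset (Fin p × Fin p))) (fun q : Fin p × Fin p => q.1 < q.2)
    have h2 := Finset.card_filter_add_card_filter_not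
      (s := Finset.univ.filter fun q : Fin p × Fin p => ¬ q.1 < q.2)
      (fun q : Fin p × Fin p => q.2 < q.1)
    have hGeq : ((Finset.univ.filter fun q : Fin p × Fin p => ¬ q.1 < q.2).filter
        fun q : Fin p × Fin p => q.2 < q.1)
        = Finset.univ.filter fun q : Fin p × Fin p => q.2 < q.1 := by
      ext x
      simp only [Finset.mem_filter, Finset.mem_univ, true_and]
      exact ⟨fun h => h.2, fun h => ⟨lt_asymm h, h⟩⟩
    have hDeq : ((Finset.univ.filter fun q : Fin p × Fin p => ¬ q.1 < q.2).filter
        fun q : Fin p × Fin p => ¬ q.2 < q.1)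
        = Finset.univ.filter fun q : Fin p × Fin p => q.1 = q.2 := by
      ext x
      simp only [Finset.mem_filter, Finset.mem_univ, true_and]
      constructor
      · rintro ⟨h1', h2'⟩
        exact le_antisymm (not_lt.1 h2') (not_lt.1 h1')
      · intro h
        rw [h]
        exact ⟨lt_irrefl _, lt_irrefl _⟩
    have cardD : (Finset.univ.filter fun q : Fin p × Fin p => q.1 = q.2).card = p := by
      have hDimg : (Finset.univ.filter fun q : Fin p × Fin p => q.1 = q.2)
          = Finset.univ.image fun i : Fin p => (i, i) := by
        ext x
        obtain ⟨a, b⟩ := x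
        simp only [Finset.mem_filter, Finset.mem_univ, true_and, Finset.mem_image]
        constructor
        · intro h
          exact ⟨a, by rw [show b = a from h.symm]⟩
        · rintro ⟨y, hy⟩
          rw [Prod.mk.injEq] at hy
          rw [← hy.1, ← hy.2]
      rw [hDimg, Finset.card_image_of_injective _
        (fun a b h => by simpa using congrArg Prod.fst h),
        Finset.card_univ, Fintype.card_fin]
    have hGT : (Finset.univ.filter fun q : Fin p × Fin p => q.2 < q.1).card
        = (Finset.univ.filter fun q : Fin p × Fin p => q.1 < q.2).card := by
      refine Finset.card_bij' (fun q _ => (q.2, q.1)) (fun q _ => (q.2, q.1)) ?_ ?_ ?_ ?_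
      · intro a ha
        simp only [Finset.mem_filter, Finset.mem_univ, true_and] at ha ⊢
        exact ha
      · intro a ha
        simp only [Finset.mem_filter, Finset.mem_univ, true_and] at ha ⊢
        exact ha
      · intro a _; rfl
      · intro a _; rfl
    have hcardu : (Finset.univ : Finset (Fin p × Fin p)).card = p * p := by
      rw [Finset.card_univ, Fintype.card_prod, Fintype.card_fin]
    rw [hGeq, hDeq, hGT, cardD] at h2
    rw [hcardu] at h1
    have hmul : p * p = p * (p - 1) + p := by
      calc p * p = p * (p - 1 + 1) := by rw [show p - 1 + 1 = p from by omega]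
        _ = p * (p - 1) + p := by ring
    rw [Nat.choose_two_right]
    omega
  have cardE : (Finset.univ.filter fun q : Fin p × Fin p => q.1 < q.2 ∧ finCycAdj p q.1 q.2).card
      = p := by
    have hfimg : (Finset.univ.filter fun q : Fin p × Fin p => q.1 < q.2 ∧ finCycAdj p q.1 q.2)
        = Finset.univ.image fun i : Fin p =>
            if h : (i : ℕ) = p - 1 then ((⟨0, by omega⟩ : Fin p), (⟨p - 1, by omega⟩ : Fin p))
            else (i, (⟨(i : ℕ) + 1, by have := i.2; omega⟩ : Fin p)) := by
      ext x
      simp only [Finset.mem_filter, Finset.mem_univ, true_and, Finset.mem_image]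
      constructor
      · intro hx
        obtain ⟨a, b⟩ := x
        obtain ⟨hab, hadj⟩ := hx
        have hadj2 : finCycAdj p a b := hadj
        have hab' : (a : ℕ) < (b : ℕ) := hab
        have hbp : (b : ℕ) < p := b.2
        rcases hadj2 with h | h
        · rw [Nat.mod_eq_of_lt (by omega : (a : ℕ) + 1 < p)] at h
          refine ⟨a, ?_⟩
          rw [dif_neg (by omega : ¬ (a : ℕ) = p - 1), Prod.mk.injEq]
          exact ⟨rfl, Fin.ext h.symm⟩
        · have hb : (b : ℕ) = p - 1 := by
            rcases Nat.lt_or_ge ((b : ℕ) + 1) p with hh | hh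
            · rw [Nat.mod_eq_of_lt hh] at h; omega
            · omega
          have ha : (a : ℕ) = 0 := by
            rw [show (b : ℕ) + 1 = p from by omega, Nat.mod_self] at h
            exact h
          refine ⟨⟨p - 1, by omega⟩, ?_⟩
          rw [dif_pos rfl, Prod.mk.injEq]
          exact ⟨Fin.ext ha.symm, Fin.ext hb.symm⟩
      · rintro ⟨y, hy⟩
        by_cases hyp1 : (y : ℕ) = p - 1
        · rw [dif_pos hyp1] at hy
          rw [← hy]
          constructor
          · show (0 : ℕ) < p - 1
            omega
          · right
            show (0 : ℕ) = (p - 1 + 1) % p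
            rw [show p - 1 + 1 = p from by omega, Nat.mod_self]
        · rw [dif_neg hyp1] at hy
          rw [← hy]
          constructor
          · show (y : ℕ) < (y : ℕ) + 1
            omega
          · left
            show ((y : ℕ) + 1 : ℕ) = ((y : ℕ) + 1) % p
            rw [Nat.mod_eq_of_lt (by have := y.2; omega)]
    rw [hfimg, Finset.card_image_of_injective _ ?_, Finset.card_univ, Fintype.card_fin]
    intro a b hab
    dsimp only at hab
    by_cases ha : (a : ℕ) = p - 1 <;> by_cases hb : (b : ℕ) = p - 1
    · exact Fin.ext (by omega)
    · rw [dif_pos ha, dif_neg hb, Prod.mk.injEq] at hab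
      have h1 := congrArg Fin.val hab.1
      have h2 := congrArg Fin.val hab.2
      simp only [] at h1 h2
      exfalso
      have := b.2
      omega
    · rw [dif_neg ha, dif_pos hb, Prod.mk.injEq] at hab
      have h1 := congrArg Fin.val hab.1
      have h2 := congrArg Fin.val hab.2
      simp only [] at h1 h2
      exfalso
      have := a.2
      omega
    · rw [dif_neg ha, dif_neg hb, Prod.mk.injEq] at hab
      exact hab.1
  rw [hSE, Finset.card_sdiff_of_subset hET, cardT, cardE]
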